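/- Let A be a G-algebra. Then G ⋊̂ (A ⋊ G) ≅ M_G ⊗ A naturally as G-algebras, via T(χ_g ⋊ a ⋊ s) = g·a ⊗ e_{g,gs}, with inverse S(a ⊗ e_{r,t}) = χ_r ⋊ r⁻¹·a ⋊ r⁻¹t. -/

import Mathlib

/-!
`T` and `S` are mutually inverse on the basis elements `χ_g ⋊ a ⋊ s` and `a ⊗ e_{r,t}`, and the
products and `G`-actions on both sides are additive in each argument, so everything reduces to
basis elements. There `(χ_g ⋊ a ⋊ s)(χ_h ⋊ b ⋊ t)` is `χ_g ⋊ a(s·b) ⋊ st` if `gs = h` and `0`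
otherwise, and `T` sends it to `g·(a(s·b)) ⊗ e_{g,ht} = (g·a)(h·b) ⊗ e_{g,ht}`, the product of
`g·a ⊗ e_{g,gs}` and `h·b ⊗ e_{h,ht}`.
-/

section

variable {R G A : Type*} [CommRing R] [Group G] [DecidableEq G] [NonUnitalRing A]
  [Module R A] [DistribMulAction G A] [SMulCommClass G R A]

/-- Crossed product multiplication on `A ⋊ G ≅ (G →₀ A)`: `(a⋊g)(b⋊h) = a(g·b) ⋊ gh`. -/
noncomputable def crossedMul (x y : G →₀ A) : G →₀ A :=
  Finsupp.sum x fun g a => Finsupp.sum y fun h b => Finsupp.single (g * h) (a * g • b)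

/-- Multiplication of `G ⋊̂ (A ⋊ G)`, modelled on `G →₀ (G →₀ A)` (the element
`χ_g ⋊ c` being `single g c`, with `c ∈ A ⋊ G`): `(χ_g ⋊ c)(χ_h ⋊ d) = χ_g ⋊ c_{g⁻¹h}·d`,
where `c_k = (c k) ⋊ k` is the degree-`k` homogeneous component of `c` in `A ⋊ G`. -/
noncomputable def hatCrossedMul (x y : G →₀ (G →₀ A)) : G →₀ (G →₀ A) :=
  Finsupp.sum x fun g c => Finsupp.sum y fun h d =>
    Finsupp.single g (crossedMul (Finsupp.single (g⁻¹ * h) (c (g⁻¹ * h))) d)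

/-- The `G`-action on `G ⋊̂ (A ⋊ G)`: `s·(χ_g ⋊ c) = χ_{sg} ⋊ c`. -/
noncomputable def hatCrossedAct (s : G) (x : G →₀ (G →₀ A)) : G →₀ (G →₀ A) :=
  Finsupp.mapDomain (fun g => s * g) x

/-- Multiplication on `M_G ⊗ A`, modelled as `(G × G) →₀ A`
(the element `a ⊗ e_{u,v}` being `single (u,v) a`). -/
noncomputable def matAMul (x y : (G × G) →₀ A) : (G × G) →₀ A :=
  Finsupp.sum x fun pq a => Finsupp.sum y fun rs b =>
    if pq.2 = rs.1 then Finsupp.single (pq.1, rs.2) (a * b) else 0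

/-- The diagonal `G`-action on `M_G ⊗ A ≅ (G × G) →₀ A`, `g·e_{s,t} = e_{gs,gt}`. -/
noncomputable def diagAct (g : G) (x : (G × G) →₀ A) : (G × G) →₀ A :=
  Finsupp.sum x fun pq a => Finsupp.single (g * pq.1, g * pq.2) (g • a)

end

open Finsupp

namespace Finsupp

variable {α β M N P : Type*} [AddZeroClass M] [AddZeroClass N] [AddCommMonoid P]

noncomputable def liftAddHom₂ (F : α → β → M →+ N →+ P) : (α →₀ M) →+ (β →₀ N) →+ P :=
  liftAddHom fun i => (liftAddHom fun j => (F i j).flip).flip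

theorem liftAddHom₂_apply (F : α → β → M →+ N →+ P) (x : α →₀ M) (y : β →₀ N) :
    liftAddHom₂ F x y = x.sum fun i a => y.sum fun j b => F i j a b := by
  simp [liftAddHom₂, liftAddHom_apply, AddMonoidHom.finsuppSum_apply]

end Finsupp

section CrossedProducts

variable {G A : Type*} [Group G] [NonUnitalRing A] [DistribMulAction G A]

noncomputable def crossedMulHom : (G →₀ A) →+ (G →₀ A) →+ (G →₀ A) :=
  liftAddHom₂ fun g h =>
    (AddMonoidHom.mul.compl₂ (DistribSMul.toAddMonoidHom A g)).compr₂ (singleAddHom (g * h))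

theorem crossedMulHom_apply (x y : G →₀ A) : crossedMulHom x y = crossedMul x y :=
  liftAddHom₂_apply _ x y

theorem crossedMul_single_single (g h : G) (a b : A) :
    crossedMul (single g a) (single h b) = single (g * h) (a * g • b) := by
  simp [crossedMul]

noncomputable def hatCrossedMulHom : (G →₀ (G →₀ A)) →+ (G →₀ (G →₀ A)) →+ (G →₀ (G →₀ A)) :=
  liftAddHom₂ fun g h =>
    (crossedMulHom.comp ((singleAddHom (g⁻¹ * h)).comp (applyAddHom (g⁻¹ * h)))).compr₂
      (singleAddHom g)

theorem hatCrossedMulHom_apply (x y : G →₀ (G →₀ A)) :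
    hatCrossedMulHom x y = hatCrossedMul x y := by
  simp [hatCrossedMulHom, liftAddHom₂_apply, crossedMulHom_apply, hatCrossedMul]

theorem hatCrossedMul_single_single [DecidableEq G] (g s h t : G) (a b : A) :
    hatCrossedMul (single g (single s a)) (single h (single t b)) =
      if g * s = h then single g (single (s * t) (a * s • b)) else 0 := by
  rw [hatCrossedMul, sum_single_index (by simp [crossedMul]),
    sum_single_index (by simp [crossedMul]), crossedMul_single_single]
  obtain rfl | hne := eq_or_ne (g * s) h
  · simp
  · have hs : s ≠ g⁻¹ * h := by rintro rfl; simp at hne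
    simp [hne, hs]

end CrossedProducts

section Matrices

variable {G A : Type*} [DecidableEq G] [NonUnitalRing A]

noncomputable def matAMulHom : ((G × G) →₀ A) →+ ((G × G) →₀ A) →+ ((G × G) →₀ A) :=
  liftAddHom₂ fun p q => if p.2 = q.1 then AddMonoidHom.mul.compr₂ (singleAddHom (p.1, q.2)) else 0

theorem matAMulHom_apply (x y : (G × G) →₀ A) : matAMulHom x y = matAMul x y := by
  simp only [matAMulHom, liftAddHom₂_apply, matAMul]
  congr! with p a q b
  split_ifs <;> rfl

theorem matAMul_single_single (p q : G × G) (a b : A) :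
    matAMul (single p a) (single q b) = if p.2 = q.1 then single (p.1, q.2) (a * b) else 0 := by
  simp [matAMul]

end Matrices

section DiagonalAction

variable {G A : Type*} [Group G] [NonUnitalRing A] [DistribMulAction G A]

noncomputable def diagActHom (s : G) : ((G × G) →₀ A) →+ ((G × G) →₀ A) :=
  liftAddHom fun p => (singleAddHom (s * p.1, s * p.2)).comp (DistribSMul.toAddMonoidHom A s)

theorem diagActHom_apply (s : G) (x : (G × G) →₀ A) : diagActHom s x = diagAct s x :=
  liftAddHom_apply _ x

theorem diagAct_single (s : G) (p : G × G) (a : A) :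
    diagAct s (single p a) = single (s * p.1, s * p.2) (s • a) := by
  simp [diagAct]

end DiagonalAction

section Equiv

variable (R : Type*) {G A : Type*} [CommRing R] [Group G] [NonUnitalRing A] [Module R A]
  [DistribMulAction G A] [SMulCommClass G R A]

noncomputable def hatCrossedToMatA : (G →₀ (G →₀ A)) →ₗ[R] ((G × G) →₀ A) :=
  lsum R fun g => lsum R fun s => (lsingle (g, g * s)).comp (DistribSMul.toLinearMap R A g)

noncomputable def matAToHatCrossed : ((G × G) →₀ A) →ₗ[R] (G →₀ (G →₀ A)) :=
  lsum R fun p => (lsingle p.1).comp <|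
    (lsingle (p.1⁻¹ * p.2)).comp (DistribSMul.toLinearMap R A p.1⁻¹)

variable {R}

@[simp]
theorem hatCrossedToMatA_single (g s : G) (a : A) :
    hatCrossedToMatA R (single g (single s a)) = single (g, g * s) (g • a) := by
  simp only [hatCrossedToMatA, lsum_single, LinearMap.comp_apply, lsingle_apply,
    DistribSMul.toLinearMap_apply]

@[simp]
theorem matAToHatCrossed_single (r t : G) (a : A) :
    matAToHatCrossed R (single (r, t) a) = single r (single (r⁻¹ * t) (r⁻¹ • a)) := by
  simp only [matAToHatCrossed, lsum_single, LinearMap.comp_apply, lsingle_apply,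
    DistribSMul.toLinearMap_apply]

variable (R)

noncomputable def hatCrossedEquivMatA : (G →₀ (G →₀ A)) ≃ₗ[R] ((G × G) →₀ A) :=
  LinearEquiv.ofLinearMap (hatCrossedToMatA R) (matAToHatCrossed R)
    (by ext ⟨r, t⟩ a; simp [smul_smul])
    (by ext g s a; simp [smul_smul])

variable {R}

theorem hatCrossedEquivMatA_hatCrossedAct (s : G) (x : G →₀ (G →₀ A)) :
    hatCrossedEquivMatA R (hatCrossedAct s x) = diagAct s (hatCrossedEquivMatA R x) := by
  have key : (hatCrossedEquivMatA R).toAddMonoidHom.comp (mapDomain.addMonoidHom (s * ·)) =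
      (diagActHom (A := A) s).comp (hatCrossedEquivMatA R).toAddMonoidHom := by
    ext g t a : 3
    simp only [AddMonoidHom.comp_apply, singleAddHom_apply, mapDomain.addMonoidHom_apply,
      mapDomain_single, LinearMap.toAddMonoidHom_coe, LinearEquiv.coe_coe, diagActHom_apply,
      hatCrossedEquivMatA, LinearEquiv.coe_ofLinearMap, hatCrossedToMatA_single, diagAct_single,
      mul_assoc, mul_smul]
  exact DFunLike.congr_fun key x

theorem hatCrossedEquivMatA_hatCrossedMul [DecidableEq G]
    (hmul : ∀ (g : G) (a b : A), g • (a * b) = (g • a) * (g • b)) (x y : G →₀ (G →₀ A)) :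
    hatCrossedEquivMatA R (hatCrossedMul x y) =
      matAMul (hatCrossedEquivMatA R x) (hatCrossedEquivMatA R y) := by
  have key : (hatCrossedMulHom (G := G) (A := A)).compr₂ (hatCrossedEquivMatA R).toAddMonoidHom =
      (matAMulHom.compl₂ (hatCrossedEquivMatA R).toAddMonoidHom).comp
        (hatCrossedEquivMatA R).toAddMonoidHom := by
    ext g s a h t b : 6
    simp only [AddMonoidHom.compr₂_apply, AddMonoidHom.comp_apply, AddMonoidHom.compl₂_apply,
      hatCrossedMulHom_apply, matAMulHom_apply, singleAddHom_apply, LinearMap.toAddMonoidHom_coe,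
      LinearEquiv.coe_coe, hatCrossedMul_single_single, hatCrossedEquivMatA,
      LinearEquiv.coe_ofLinearMap, hatCrossedToMatA_single, matAMul_single_single]
    split_ifs with hgs
    · subst hgs
      rw [hatCrossedToMatA_single, hmul, mul_smul, mul_assoc]
    · exact map_zero _
  simpa only [AddMonoidHom.compr₂_apply, AddMonoidHom.comp_apply, AddMonoidHom.compl₂_apply,
    hatCrossedMulHom_apply, matAMulHom_apply, LinearMap.toAddMonoidHom_coe, LinearEquiv.coe_coe]
    using DFunLike.congr_fun (DFunLike.congr_fun key x) y

end Equiv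

section

variable {R G A : Type*} [CommRing R] [Group G] [DecidableEq G] [NonUnitalRing A]
  [Module R A] [DistribMulAction G A] [SMulCommClass G R A]

/-- Let `A` be a `G`-algebra. Then `G ⋊̂ (A ⋊ G) ≅ M_G ⊗ A` naturally as
`G`-algebras, via `T(χ_g ⋊ a ⋊ s) = g·a ⊗ e_{g,gs}`, with inverse
`S(a ⊗ e_{r,t}) = χ_r ⋊ r⁻¹·a ⋊ r⁻¹t`. -/
theorem dual_crossed_crossed_iso_matrices
    (hmul : ∀ (g : G) (a b : A), g • (a * b) = (g • a) * (g • b)) :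
    ∃ e : (G →₀ (G →₀ A)) ≃ₗ[R] ((G × G) →₀ A),
      (∀ (g s : G) (a : A),
        e (Finsupp.single g (Finsupp.single s a)) = Finsupp.single (g, g * s) (g • a)) ∧
      (∀ (r t : G) (a : A),
        e.symm (Finsupp.single (r, t) a) =
          Finsupp.single r (Finsupp.single (r⁻¹ * t) (r⁻¹ • a))) ∧
      (∀ x y : G →₀ (G →₀ A), e (hatCrossedMul x y) = matAMul (e x) (e y)) ∧
      (∀ (s : G) (x : G →₀ (G →₀ A)), e (hatCrossedAct s x) = diagAct s (e x)) := by
  exact ⟨hatCrossedEquivMatA R, hatCrossedToMatA_single, matAToHatCrossed_single,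
    hatCrossedEquivMatA_hatCrossedMul hmul, hatCrossedEquivMatA_hatCrossedAct⟩

end
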